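/- Let S = {g₀ ∈ P : Ad_{g₀}(J_{𝔻,rt}) = J_{𝔻,rt} and λ_𝔻(Ad_{g₀}(x)) = λ_𝔻(x) for all x ∈ J_{𝔻,rt}}. If g₀ = bt ∈ S with b ∈ N, t ∈ R, and r ∈ R°_𝔻 (the joint left-right R-stabilizer of λ_𝔻), then trt⁻¹ ∈ R°_𝔻, and the formula g₀ · r = trt⁻¹ defines an action of S on R°_𝔻. -/

import Mathlib

open scoped BigOperators

noncomputable section

variable (F : Type) [Field F] [Fintype F] [DecidableEq F]

def JSet {n s : ℕ} (f : Fin n → Fin s) : Set (Matrix (Fin n) (Fin n) F) :=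
  {x | ∀ i j, ¬ f i < f j → x i j = 0}

def NSet {n s : ℕ} (f : Fin n → Fin s) : Set (Matrix (Fin n) (Fin n) F) :=
  {a | ∃ x ∈ JSet F f, a = 1 + x}

def RSet {n s : ℕ} (f : Fin n → Fin s) : Set (Matrix (Fin n) (Fin n) F) :=
  {r | IsUnit r ∧ ∀ i j, f i ≠ f j → r i j = 0}

def ParSet {n s : ℕ} (f : Fin n → Fin s) : Set (Matrix (Fin n) (Fin n) F) :=
  {g | IsUnit g ∧ ∀ i j, f j < f i → g i j = 0}

def lamOf {n : ℕ} (Λ x : Matrix (Fin n) (Fin n) F) : F :=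
  ∑ i, ∑ j, Λ i j * x i j

/-- `J_{𝔻,rt} = {x ∈ J : λ_𝔻(xJ) = 0}`. -/
def Jrt {n s : ℕ} (f : Fin n → Fin s) (Λ : Matrix (Fin n) (Fin n) F) :
    Set (Matrix (Fin n) (Fin n) F) :=
  {x | x ∈ JSet F f ∧ ∀ y ∈ JSet F f, lamOf F Λ (x * y) = 0}

/-- `R°_𝔻`: the joint left-right stabilizer of `λ_𝔻` in `R`. -/
def RcircSet {n s : ℕ} (f : Fin n → Fin s) (Λ : Matrix (Fin n) (Fin n) F) :
    Set (Matrix (Fin n) (Fin n) F) :=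
  {r | r ∈ RSet F f ∧ ∀ x ∈ JSet F f,
    lamOf F Λ (r * x) = lamOf F Λ x ∧ lamOf F Λ (x * r) = lamOf F Λ x}

/-- The subgroup `S`: elements of `P` whose adjoint action preserves `J_{𝔻,rt}` and the
restriction of `λ_𝔻` to it. -/
def StabSet {n s : ℕ} (f : Fin n → Fin s) (Λ : Matrix (Fin n) (Fin n) F) :
    Set (Matrix (Fin n) (Fin n) F) :=
  {g | g ∈ ParSet F f ∧ (∀ x, x ∈ Jrt F f Λ ↔ g * x * g⁻¹ ∈ Jrt F f Λ) ∧
    ∀ x ∈ Jrt F f Λ, lamOf F Λ (g * x * g⁻¹) = lamOf F Λ x}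

/-!
Write `λ(x) = tr(Λᵀ x)`. The annihilator of `J` under the trace pairing is the parabolic algebra,
so `x ∈ J_{𝔻,rt}` iff `Λᵀ x` is block upper triangular, and `r ∈ R°_𝔻` iff `r ∈ R` and
`Λᵀ r = Λᵀ = r Λᵀ`. Since the blocks of `𝔻` are invertible, the latter says that `P r = P` and
`r Q = Q`, where `P` and `Q` are the coordinate projections onto the rows `⋃ A` and the columns
`⋃ B` of `𝔻`.

Testing `g₀ ∈ S` on the matrix units `E_{pc} ∈ J_{𝔻,rt}` shows that `g₀` commutes with `Λᵀ` at the
entries linking a block of rows with a higher block of columns. Together with the invertibility of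
the blocks of `𝔻`, this forces the diagonal blocks of `g₀`, which are those of `t`, to satisfy
`P t P = P t` and `Q t Q = t Q`; the second passes to `t⁻¹` by block triangularity. Then
`P (t r t⁻¹) = P` and `(t r t⁻¹) Q = Q`. Finally `t` is determined by `g₀`: it is its block diagonal
part, as `b` is unipotent block upper triangular.
-/

open Matrix Finset

section BlockTriangular

variable {ι α R : Type*} [Fintype ι] [LinearOrder α] {b : ι → α}

theorem Matrix.BlockTriangular.exists_apply_ne_zero_of_mul_eq_one [Semiring R] [Nontrivial R]
    [DecidableEq ι] {δ γ : Matrix ι ι R} (hδ : δ.BlockTriangular b) (hγ : γ.BlockTriangular b)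
    (h : δ * γ = 1) (c : ι) : ∃ k, b k = b c ∧ δ c k ≠ 0 := by
  by_contra! hc
  have : (δ * γ) c c = 0 := by
    rw [mul_apply]
    refine Finset.sum_eq_zero fun k _ => ?_
    rcases lt_trichotomy (b k) (b c) with hk | hk | hk
    · rw [hδ hk, zero_mul]
    · rw [hc k hk, zero_mul]
    · rw [hγ hk, mul_zero]
  simp [h] at this

theorem Matrix.BlockTriangular.mulVec_apply_eq_zero [NonUnitalNonAssocSemiring R]
    {δ : Matrix ι ι R} (hδ : δ.BlockTriangular b) {l : α} {v : ι → R}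
    (hv : ∀ i, l < b i → v i = 0) {i : ι} (hi : l < b i) : (δ *ᵥ v) i = 0 := by
  simp only [mulVec, dotProduct]
  refine Finset.sum_eq_zero fun k _ => ?_
  rcases lt_or_ge (b k) (b i) with hk | hk
  · rw [hδ hk, zero_mul]
  · rw [hv k (hi.trans_le hk), mul_zero]

theorem Matrix.BlockTriangular.apply_eq_mulVec_apply [Semiring R] [DecidableEq ι]
    {γ δ : Matrix ι ι R} (hγ : γ.BlockTriangular b) (hδ : δ.BlockTriangular b) (h : γ * δ = 1)
    {l : α} {v w : ι → R} (hv : ∀ i, l < b i → v i = 0) (hw : ∀ i, l < b i → w i = 0)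
    (hvw : ∀ i, b i = l → (δ *ᵥ v) i = w i) {j : ι} (hj : b j = l) : v j = (γ *ᵥ w) j := by
  calc v j = (γ *ᵥ (δ *ᵥ v)) j := by rw [mulVec_mulVec, h, one_mulVec]
    _ = (γ *ᵥ w) j := by
      show ∑ c, γ j c * (δ *ᵥ v) c = ∑ c, γ j c * w c
      refine Finset.sum_congr rfl fun c _ => ?_
      rcases lt_trichotomy (b c) l with hc | hc | hc
      · rw [hγ (hj ▸ hc), zero_mul, zero_mul]
      · rw [hvw c hc]
      · rw [hδ.mulVec_apply_eq_zero hv hc, hw c hc]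

end BlockTriangular

theorem Matrix.blockTriangular_notMem_iff {ι R : Type*} [Zero R] {S : Finset ι}
    {M : Matrix ι ι R} :
    M.BlockTriangular (· ∉ S) ↔ ∀ i ∉ S, ∀ j ∈ S, M i j = 0 := by
  simp only [BlockTriangular, lt_iff_le_not_ge, le_Prop_eq, Classical.not_imp, not_not]
  exact ⟨fun h i hi j hj => h ⟨fun _ => hi, hi, hj⟩, fun h i j hij => h i hij.2.1 j hij.2.2⟩

theorem Matrix.mul_single_one_mul_apply {ι R : Type*} [Fintype ι] [DecidableEq ι] [Semiring R]
    (M N : Matrix ι ι R) (p c a b : ι) : (M * single p c (1 : R) * N) a b = M a p * N c b := by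
  rw [mul_apply, Finset.sum_eq_single c (fun k _ hk => by rw [mul_single_apply_of_ne _ _ _ _ _ hk,
    zero_mul]) (by simp), mul_single_apply_same, mul_one]

theorem Matrix.eq_zero_of_vecMul_apply_eq_zero {ι μ K : Type*} [Fintype ι] [Fintype μ]
    [DecidableEq μ] [Field K] {M : Matrix ι ι K} {S T : Finset ι} (eS : μ ≃ S) (eT : μ ≃ T)
    (hM : IsUnit (M.submatrix (fun a => (eS a : ι)) (fun b => (eT b : ι))))
    (hST : ∀ i ∉ S, ∀ j ∈ T, M i j = 0) {v : ι → K} (hv : ∀ j ∈ T, (v ᵥ* M) j = 0) :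
    ∀ i ∈ S, v i = 0 := by
  have hw : (fun a => v (eS a)) ᵥ* M.submatrix (fun a => (eS a : ι)) (fun b => (eT b : ι)) =
      0 ᵥ* M.submatrix (fun a => (eS a : ι)) (fun b => (eT b : ι)) := by
    ext b
    rw [zero_vecMul, Pi.zero_apply, ← hv _ (eT b).2]
    simp only [vecMul, dotProduct, submatrix_apply]
    rw [← Finset.sum_subset (Finset.subset_univ S) fun i _ hi => by
      rw [hST i hi _ (eT b).2, mul_zero], ← Finset.sum_coe_sort S]
    exact eS.sum_comp fun i => v i * M i (eT b)
  intro i hi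
  simpa using congrFun (vecMul_injective_iff_isUnit.2 hM hw) (eS.symm ⟨i, hi⟩)

theorem Matrix.eq_zero_of_mulVec_apply_eq_zero {ι μ K : Type*} [Fintype ι] [Fintype μ]
    [DecidableEq μ] [Field K] {M : Matrix ι ι K} {S T : Finset ι} (eS : μ ≃ S) (eT : μ ≃ T)
    (hM : IsUnit (M.submatrix (fun a => (eS a : ι)) (fun b => (eT b : ι))))
    (hST : ∀ i ∈ S, ∀ j ∉ T, M i j = 0) {v : ι → K} (hv : ∀ i ∈ S, (M *ᵥ v) i = 0) :
    ∀ j ∈ T, v j = 0 :=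
  eq_zero_of_vecMul_apply_eq_zero (M := Mᵀ) eT eS
    (by rwa [← transpose_submatrix, isUnit_transpose]) (fun j hj i hi => hST i hi j hj)
    (by simpa [vecMul_transpose] using hv)

theorem mul_conj_eq_of_mul_eq {M : Type*} [Monoid M] {p t t' r : M} (hpt : p * t * p = p * t)
    (hpr : p * r = p) (htt' : t * t' = 1) : p * (t * r * t') = p :=
  calc p * (t * r * t') = p * t * p * r * t' := by rw [hpt]; simp only [mul_assoc]
    _ = p * t * (p * r) * t' := by simp only [mul_assoc]
    _ = p := by rw [hpr, hpt, mul_assoc, htt', mul_one]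

theorem conj_mul_eq_of_mul_eq {M : Type*} [Monoid M] {q t t' r : M} (hqt : q * t' * q = t' * q)
    (hrq : r * q = q) (htt' : t * t' = 1) : t * r * t' * q = q :=
  calc t * r * t' * q = t * (r * q) * t' * q := by rw [mul_assoc _ t', ← hqt]; simp only [mul_assoc]
    _ = q := by rw [hrq, mul_assoc t q, mul_assoc, hqt, ← mul_assoc, htt', one_mul]

def diagProj {ι R : Type*} [DecidableEq ι] [Zero R] [One R] (S : Finset ι) : Matrix ι ι R :=
  diagonal fun i => if i ∈ S then 1 else 0

section DiagProj

variable {ι R : Type*} [Fintype ι] [DecidableEq ι] [Semiring R]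

theorem diagProj_mul_apply (S : Finset ι) (M : Matrix ι ι R) (i k : ι) :
    ((diagProj S : Matrix ι ι R) * M) i k = if i ∈ S then M i k else 0 := by
  simp [diagProj, diagonal_mul, ite_mul]

theorem mul_diagProj_apply (S : Finset ι) (M : Matrix ι ι R) (i k : ι) :
    (M * (diagProj S : Matrix ι ι R)) i k = if k ∈ S then M i k else 0 := by
  simp [diagProj, mul_diagonal, mul_ite]

theorem diagProj_mul_mul_diagProj_eq_diagProj_mul {S : Finset ι} {M : Matrix ι ι R}
    (h : ∀ i ∈ S, ∀ k ∉ S, M i k = 0) :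
    diagProj S * M * diagProj S = (diagProj S : Matrix ι ι R) * M := by
  ext i k
  simp only [mul_diagProj_apply, diagProj_mul_apply]
  by_cases hi : i ∈ S <;> by_cases hk : k ∈ S <;> simp [hi, hk, h]

theorem diagProj_mul_mul_diagProj_eq_mul_diagProj {S : Finset ι} {M : Matrix ι ι R}
    (h : ∀ i ∉ S, ∀ k ∈ S, M i k = 0) :
    diagProj S * M * diagProj S = M * (diagProj S : Matrix ι ι R) := by
  ext i k
  simp only [mul_diagProj_apply, diagProj_mul_apply]
  by_cases hi : i ∈ S <;> by_cases hk : k ∈ S <;> simp [hi, hk, h]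

end DiagProj

section Parabolic

variable {K : Type} [Field K] {n s : ℕ} {f : Fin n → Fin s}

theorem mem_RSet_iff {r : Matrix (Fin n) (Fin n) K} :
    r ∈ RSet K f ↔ IsUnit r ∧ r.BlockTriangular f ∧ r.BlockTriangular (OrderDual.toDual ∘ f) :=
  and_congr_right fun _ =>
    ⟨fun h => ⟨fun i j hij => h i j hij.ne', fun i j hij => h i j (show f i < f j from hij).ne⟩,
      fun ⟨h, h'⟩ i j hij =>
        hij.lt_or_gt.elim (fun hlt => h' (show f i < f j from hlt)) (fun hgt => h hgt)⟩

theorem conj_mem_RSet {t r : Matrix (Fin n) (Fin n) K} (ht : t ∈ RSet K f) (hr : r ∈ RSet K f) :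
    t * r * t⁻¹ ∈ RSet K f := by
  obtain ⟨htu, htT, htT'⟩ := mem_RSet_iff.1 ht
  obtain ⟨hru, hrT, hrT'⟩ := mem_RSet_iff.1 hr
  let _ := htu.invertible
  exact mem_RSet_iff.2 ⟨(htu.mul hru).mul (isUnit_nonsing_inv_iff.2 htu),
    (htT.mul hrT).mul (blockTriangular_inv_of_blockTriangular htT),
    (htT'.mul hrT').mul (blockTriangular_inv_of_blockTriangular htT')⟩

theorem mul_apply_eq_of_mem_NSet {u d : Matrix (Fin n) (Fin n) K} (hu : u ∈ NSet K f)
    (hd : ∀ i j, f i ≠ f j → d i j = 0) {i j : Fin n} (hij : f i = f j) : (u * d) i j = d i j := by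
  obtain ⟨x, hx, rfl⟩ := hu
  rw [add_mul, one_mul, Matrix.add_apply, add_eq_left, mul_apply]
  refine Finset.sum_eq_zero fun k _ => ?_
  by_cases hik : f i < f k
  · rw [hd k j (hij ▸ hik.ne'), mul_zero]
  · rw [hx i k hik, zero_mul]

theorem eq_of_mul_eq_mul_of_mem_NSet {u u' d d' : Matrix (Fin n) (Fin n) K} (hu : u ∈ NSet K f)
    (hu' : u' ∈ NSet K f) (hd : d ∈ RSet K f) (hd' : d' ∈ RSet K f) (h : u * d = u' * d') :
    d = d' := by
  ext i j
  by_cases hij : f i = f j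
  · rw [← mul_apply_eq_of_mem_NSet hu hd.2 hij, h, mul_apply_eq_of_mem_NSet hu' hd'.2 hij]
  · rw [hd.2 i j hij, hd'.2 i j hij]

theorem single_mem_JSet {i j : Fin n} (h : f i < f j) : single i j (1 : K) ∈ JSet K f :=
  fun _ _ hab => single_apply_of_ne _ _ _ _ _ <| by rintro ⟨rfl, rfl⟩; exact hab h

theorem lamOf_eq_trace (Λ x : Matrix (Fin n) (Fin n) K) : lamOf K Λ x = trace (Λᵀ * x) := by
  simp only [lamOf, trace, diag_apply, mul_apply, transpose_apply]
  exact Finset.sum_comm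

theorem forall_trace_mul_eq_zero_iff {N : Matrix (Fin n) (Fin n) K} :
    (∀ y ∈ JSet K f, trace (N * y) = 0) ↔ N.BlockTriangular f := by
  refine ⟨fun h i j hji => ?_, fun hN y hy => ?_⟩
  · simpa [trace_mul_single] using h _ (single_mem_JSet (K := K) hji)
  · simp only [trace, diag_apply, mul_apply]
    refine Finset.sum_eq_zero fun i _ => Finset.sum_eq_zero fun k _ => ?_
    by_cases hki : f k < f i
    · rw [hN hki, zero_mul]
    · rw [hy k i hki, mul_zero]

theorem mem_Jrt_iff {Λ x : Matrix (Fin n) (Fin n) K} :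
    x ∈ Jrt K f Λ ↔ x ∈ JSet K f ∧ (Λᵀ * x).BlockTriangular f := by
  simp only [Jrt, Set.mem_ofPred_eq, lamOf_eq_trace, ← Matrix.mul_assoc,
    forall_trace_mul_eq_zero_iff]

theorem single_mem_Jrt {Λ : Matrix (Fin n) (Fin n) K} {p c : Fin n} (h : f p < f c)
    (hrow : ∀ j, Λ p j ≠ 0 → f j ≤ f c) : single p c (1 : K) ∈ Jrt K f Λ := by
  refine mem_Jrt_iff.2 ⟨single_mem_JSet h, fun j k hkj => ?_⟩
  by_cases hk : k = c
  · subst hk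
    rw [mul_single_apply_same, transpose_apply, mul_one]
    by_contra hne
    exact (hrow j hne).not_gt hkj
  · exact mul_single_apply_of_ne _ _ _ _ _ hk _

theorem transpose_mul_apply_eq_zero {Λ d : Matrix (Fin n) (Fin n) K}
    (hΛ : ∀ i j, Λ i j ≠ 0 → f i < f j) (hd : ∀ i j, f i ≠ f j → d i j = 0) (j k : Fin n)
    (hkj : ¬ f k < f j) : (Λᵀ * d) j k = 0 := by
  simp only [mul_apply, transpose_apply]
  refine Finset.sum_eq_zero fun i _ => ?_
  by_cases hi : Λ i j = 0
  · rw [hi, zero_mul]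
  · rw [hd i k fun hik => hkj (hik ▸ hΛ i j hi), mul_zero]

theorem mul_transpose_apply_eq_zero {Λ d : Matrix (Fin n) (Fin n) K}
    (hΛ : ∀ i j, Λ i j ≠ 0 → f i < f j) (hd : ∀ i j, f i ≠ f j → d i j = 0) (j k : Fin n)
    (hkj : ¬ f k < f j) : (d * Λᵀ) j k = 0 := by
  simp only [mul_apply, transpose_apply]
  refine Finset.sum_eq_zero fun i _ => ?_
  by_cases hi : Λ k i = 0
  · rw [hi, mul_zero]
  · rw [hd j i fun hji => hkj (hji ▸ hΛ k i hi), zero_mul]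

theorem eq_of_forall_trace_mul_eq {N N' : Matrix (Fin n) (Fin n) K}
    (hN : ∀ j k, ¬ f k < f j → N j k = 0) (hN' : ∀ j k, ¬ f k < f j → N' j k = 0)
    (h : ∀ y ∈ JSet K f, trace (N * y) = trace (N' * y)) : N = N' := by
  have hT : (N - N').BlockTriangular f := forall_trace_mul_eq_zero_iff.1 fun y hy => by
    rw [Matrix.sub_mul, trace_sub, h y hy, sub_self]
  ext j k
  by_cases hkj : f k < f j
  · exact sub_eq_zero.1 (hT hkj)
  · rw [hN j k hkj, hN' j k hkj]

theorem mem_RcircSet_iff_of_lt {Λ r : Matrix (Fin n) (Fin n) K}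
    (hΛ : ∀ i j, Λ i j ≠ 0 → f i < f j) :
    r ∈ RcircSet K f Λ ↔ r ∈ RSet K f ∧ Λᵀ * r = Λᵀ ∧ r * Λᵀ = Λᵀ := by
  have hΛT : ∀ j k, ¬ f k < f j → Λᵀ j k = 0 := fun j k hkj => not_not.1 (mt (hΛ k j) hkj)
  simp only [RcircSet, Set.mem_ofPred_eq, lamOf_eq_trace]
  refine and_congr_right fun hr => ⟨fun h => ⟨?_, ?_⟩, fun ⟨hl, hr⟩ x _ => ⟨?_, ?_⟩⟩
  · refine eq_of_forall_trace_mul_eq (transpose_mul_apply_eq_zero hΛ hr.2) hΛT fun y hy => ?_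
    rw [Matrix.mul_assoc, (h y hy).1]
  · refine eq_of_forall_trace_mul_eq (mul_transpose_apply_eq_zero hΛ hr.2) hΛT fun y hy => ?_
    rw [Matrix.mul_assoc, ← trace_mul_comm, Matrix.mul_assoc, (h y hy).2]
  · rw [← Matrix.mul_assoc, hl]
  · rw [← Matrix.mul_assoc, trace_mul_comm, ← Matrix.mul_assoc, hr]

theorem transpose_mul_apply_eq_mul_transpose_apply {Λ γ : Matrix (Fin n) (Fin n) K}
    (hγ : γ ∈ StabSet K f Λ) {p j : Fin n} (hpj : f p < f j)
    (hrow : ∀ c, Λ p c ≠ 0 → f c ≤ f j) : (Λᵀ * γ) j p = (γ * Λᵀ) j p := by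
  obtain ⟨⟨hγu, hγT⟩, hJrt, hlam⟩ := hγ
  let _ := hγu.invertible
  have hδT : γ⁻¹.BlockTriangular f := blockTriangular_inv_of_blockTriangular hγT
  have hE : ∀ c, f c = f j → single p c (1 : K) ∈ Jrt K f Λ := fun c hc =>
    single_mem_Jrt (hc ▸ hpj) (hc ▸ hrow)
  -- Test `γ ∈ S` on `E_{pc}` for `c` in the block of `j`: membership of `Ad_γ E_{pc}` in
  -- `J_{𝔻,rt}` kills `Λᵀ γ e_p` above that block, and invariance of `λ` says that
  -- `γ⁻¹ Λᵀ γ e_p` agrees with `Λᵀ e_p` on it.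
  refine BlockTriangular.apply_eq_mulVec_apply hγT hδT (mul_inv_of_invertible γ)
    (v := fun b => (Λᵀ * γ) b p) (w := fun c => Λᵀ c p) (fun b hb => ?_) (fun c hc => ?_)
    (fun c hc => ?_) rfl
  · obtain ⟨k, hk, hne⟩ :=
      hδT.exists_apply_ne_zero_of_mul_eq_one (b := f) hγT (inv_mul_of_invertible γ) j
    have := (mem_Jrt_iff.1 ((hJrt _).1 (hE j rfl))).2 (hk ▸ hb : f k < f b)
    rw [← Matrix.mul_assoc, ← Matrix.mul_assoc, mul_single_one_mul_apply] at this
    exact (mul_eq_zero.1 this).resolve_right hne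
  · by_contra hne
    exact (hrow c hne).not_gt hc
  · show (γ⁻¹ * (Λᵀ * γ)) c p = Λᵀ c p
    have := hlam _ (hE c hc)
    rw [lamOf_eq_trace, lamOf_eq_trace, ← Matrix.mul_assoc, ← Matrix.mul_assoc, trace_mul_comm,
      ← Matrix.mul_assoc, ← Matrix.mul_assoc, trace_mul_single, trace_mul_single] at this
    simpa [Matrix.mul_assoc] using this

end Parabolic

/-- The block-rook placement `𝔻 = (A, B, Λ)`, with `λ_𝔻 = lamOf K Λ`. -/
structure IsBlockRookPlacement {K : Type} [Field K] {n s m : ℕ} (f : Fin n → Fin s)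
    (A B : Fin m → Finset (Fin n)) (hc : ∀ t, (B t).card = (A t).card)
    (Λ : Matrix (Fin n) (Fin n) K) : Prop where
  blocks : ∀ t, ∃ k l : Fin s, k < l ∧ (∀ i ∈ A t, f i = k) ∧ (∀ j ∈ B t, f j = l)
  disjoint_left : ∀ t t', t ≠ t' → Disjoint (A t) (A t')
  disjoint_right : ∀ t t', t ≠ t' → Disjoint (B t) (B t')
  support : ∀ i j, Λ i j ≠ 0 → ∃ t, i ∈ A t ∧ j ∈ B t
  isUnit : ∀ t, IsUnit (Matrix.of fun (a b : Fin (A t).card) =>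
    Λ (((A t).orderIsoOfFin rfl a : Fin n)) (((B t).orderIsoOfFin (hc t) b : Fin n)))

namespace IsBlockRookPlacement

variable {K : Type} [Field K] {n s m : ℕ} {f : Fin n → Fin s} {A B : Fin m → Finset (Fin n)}
  {hc : ∀ t, (B t).card = (A t).card} {Λ : Matrix (Fin n) (Fin n) K}

theorem mem_left_of_ne_zero (hD : IsBlockRookPlacement f A B hc Λ) {t : Fin m} {i j : Fin n}
    (hj : j ∈ B t) (h : Λ i j ≠ 0) : i ∈ A t := by
  obtain ⟨t', hi, hj'⟩ := hD.support i j h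
  obtain rfl : t' = t :=
    by_contra fun hne => Finset.disjoint_left.1 (hD.disjoint_right t' t hne) hj' hj
  exact hi

theorem mem_right_of_ne_zero (hD : IsBlockRookPlacement f A B hc Λ) {t : Fin m} {i j : Fin n}
    (hi : i ∈ A t) (h : Λ i j ≠ 0) : j ∈ B t := by
  obtain ⟨t', hi', hj⟩ := hD.support i j h
  obtain rfl : t' = t :=
    by_contra fun hne => Finset.disjoint_left.1 (hD.disjoint_left t' t hne) hi' hi
  exact hj

theorem lt_of_ne_zero (hD : IsBlockRookPlacement f A B hc Λ) (i j : Fin n) (h : Λ i j ≠ 0) :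
    f i < f j := by
  obtain ⟨t, hi, hj⟩ := hD.support i j h
  obtain ⟨k, l, hkl, hA, hB⟩ := hD.blocks t
  rw [hA i hi, hB j hj]
  exact hkl

theorem apply_eq_zero_of_notMem_left (hD : IsBlockRookPlacement f A B hc Λ) {i : Fin n}
    (hi : i ∉ univ.biUnion A) (j : Fin n) : Λ i j = 0 := by
  by_contra h
  obtain ⟨t, hit, -⟩ := hD.support i j h
  exact hi (mem_biUnion.2 ⟨t, mem_univ t, hit⟩)

theorem apply_eq_zero_of_notMem_right (hD : IsBlockRookPlacement f A B hc Λ) {j : Fin n}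
    (hj : j ∉ univ.biUnion B) (i : Fin n) : Λ i j = 0 := by
  by_contra h
  obtain ⟨t, -, hjt⟩ := hD.support i j h
  exact hj (mem_biUnion.2 ⟨t, mem_univ t, hjt⟩)

theorem eq_zero_of_transpose_mul_apply (hD : IsBlockRookPlacement f A B hc Λ) (t : Fin m)
    {X : Matrix (Fin n) (Fin n) K} {p : Fin n} (hX : ∀ j ∈ B t, (Λᵀ * X) j p = 0) :
    ∀ i ∈ A t, X i p = 0 :=
  eq_zero_of_vecMul_apply_eq_zero ((A t).orderIsoOfFin rfl).toEquiv
    ((B t).orderIsoOfFin (hc t)).toEquiv (hD.isUnit t)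
    (fun _ hi _ hj => not_not.1 (mt (hD.mem_left_of_ne_zero hj) hi))
    (fun j hj => by rw [← hX j hj]; simp [vecMul, dotProduct, mul_apply, mul_comm])

theorem eq_zero_of_mul_transpose_apply (hD : IsBlockRookPlacement f A B hc Λ) (t : Fin m)
    {X : Matrix (Fin n) (Fin n) K} {p : Fin n} (hX : ∀ i ∈ A t, (X * Λᵀ) p i = 0) :
    ∀ j ∈ B t, X p j = 0 :=
  eq_zero_of_mulVec_apply_eq_zero ((A t).orderIsoOfFin rfl).toEquiv
    ((B t).orderIsoOfFin (hc t)).toEquiv (hD.isUnit t)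
    (fun _ hi _ hj => not_not.1 (mt (hD.mem_right_of_ne_zero hi) hj))
    (fun i hi => by rw [← hX i hi]; simp [mulVec, dotProduct, mul_apply, mul_comm])

theorem apply_eq_zero_of_mem_StabSet_left (hD : IsBlockRookPlacement f A B hc Λ)
    {γ : Matrix (Fin n) (Fin n) K} (hγ : γ ∈ StabSet K f Λ) {t : Fin m} {i k : Fin n}
    (hi : i ∈ A t) (hk : k ∉ univ.biUnion A) (hki : f k = f i) : γ i k = 0 := by
  obtain ⟨_, _, hkl, hA, hB⟩ := hD.blocks t
  refine hD.eq_zero_of_transpose_mul_apply t (fun j hj => ?_) i hi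
  rw [transpose_mul_apply_eq_mul_transpose_apply hγ (by rw [hki, hA i hi, hB j hj]; exact hkl)
    fun c hc => absurd (hD.apply_eq_zero_of_notMem_left hk c) hc]
  simp [mul_apply, hD.apply_eq_zero_of_notMem_left hk]

theorem apply_eq_zero_of_mem_StabSet_right (hD : IsBlockRookPlacement f A B hc Λ)
    {γ : Matrix (Fin n) (Fin n) K} (hγ : γ ∈ StabSet K f Λ) {t : Fin m} {j k : Fin n}
    (hj : j ∈ B t) (hk : k ∉ univ.biUnion B) (hkj : f k = f j) : γ k j = 0 := by
  obtain ⟨_, _, hkl, hA, hB⟩ := hD.blocks t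
  refine hD.eq_zero_of_mul_transpose_apply t (fun i hi => ?_) j hj
  rw [← transpose_mul_apply_eq_mul_transpose_apply hγ (by rw [hkj, hA i hi, hB j hj]; exact hkl)
    fun c hc => by rw [hkj, hB j hj, hB c (hD.mem_right_of_ne_zero hi hc)]]
  simp [mul_apply, hD.apply_eq_zero_of_notMem_right hk]

theorem transpose_mul_eq_zero_iff (hD : IsBlockRookPlacement f A B hc Λ)
    {X : Matrix (Fin n) (Fin n) K} : Λᵀ * X = 0 ↔ diagProj (univ.biUnion A) * X = 0 := by
  have hΛ : Λᵀ * diagProj (univ.biUnion A) = Λᵀ := by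
    ext j i
    rw [mul_diagProj_apply]
    split_ifs with hi
    · rfl
    · exact (hD.apply_eq_zero_of_notMem_left hi j).symm
  refine ⟨fun h => ?_, fun h => by rw [← hΛ, Matrix.mul_assoc, h, Matrix.mul_zero]⟩
  ext i k
  rw [diagProj_mul_apply, Matrix.zero_apply]
  split_ifs with hi
  · obtain ⟨t, -, hit⟩ := mem_biUnion.1 hi
    exact hD.eq_zero_of_transpose_mul_apply t (fun j _ => by rw [h]; rfl) i hit
  · rfl

theorem mul_transpose_eq_zero_iff (hD : IsBlockRookPlacement f A B hc Λ)
    {X : Matrix (Fin n) (Fin n) K} : X * Λᵀ = 0 ↔ X * diagProj (univ.biUnion B) = 0 := by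
  have hΛ : diagProj (univ.biUnion B) * Λᵀ = Λᵀ := by
    ext j i
    rw [diagProj_mul_apply]
    split_ifs with hj
    · rfl
    · exact (hD.apply_eq_zero_of_notMem_right hj i).symm
  refine ⟨fun h => ?_, fun h => by rw [← hΛ, ← Matrix.mul_assoc, h, Matrix.zero_mul]⟩
  ext k j
  rw [mul_diagProj_apply, Matrix.zero_apply]
  split_ifs with hj
  · obtain ⟨t, -, hjt⟩ := mem_biUnion.1 hj
    exact hD.eq_zero_of_mul_transpose_apply t (fun i _ => by rw [h]; rfl) j hjt
  · rfl

theorem mem_RcircSet_iff (hD : IsBlockRookPlacement f A B hc Λ) {r : Matrix (Fin n) (Fin n) K} :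
    r ∈ RcircSet K f Λ ↔ r ∈ RSet K f ∧ diagProj (univ.biUnion A) * r = diagProj (univ.biUnion A) ∧
      r * diagProj (univ.biUnion B) = diagProj (univ.biUnion B) := by
  rw [mem_RcircSet_iff_of_lt hD.lt_of_ne_zero]
  refine and_congr_right fun _ => and_congr ?_ ?_
  · rw [← sub_eq_zero, ← mul_one Λᵀ, Matrix.mul_assoc, ← Matrix.mul_sub, one_mul,
      hD.transpose_mul_eq_zero_iff, Matrix.mul_sub, mul_one, sub_eq_zero]
  · rw [← sub_eq_zero, ← one_mul Λᵀ, ← Matrix.mul_assoc, ← Matrix.sub_mul, Matrix.mul_one,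
      hD.mul_transpose_eq_zero_iff, Matrix.sub_mul, one_mul, sub_eq_zero]

theorem conj_mem_RcircSet (hD : IsBlockRookPlacement f A B hc Λ)
    {g u t r : Matrix (Fin n) (Fin n) K} (hg : g ∈ StabSet K f Λ) (hu : u ∈ NSet K f)
    (ht : t ∈ RSet K f) (hgut : g = u * t) (hr : r ∈ RcircSet K f Λ) :
    t * r * t⁻¹ ∈ RcircSet K f Λ := by
  have hg_eq : ∀ i j, f i = f j → t i j = g i j := fun i j hij => by
    rw [hgut, mul_apply_eq_of_mem_NSet hu ht.2 hij]
  have hrows : ∀ i ∈ univ.biUnion A, ∀ k ∉ univ.biUnion A, t i k = 0 := fun i hi k hk => by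
    by_cases hik : f i = f k
    · obtain ⟨τ, -, hiτ⟩ := mem_biUnion.1 hi
      rw [hg_eq i k hik, hD.apply_eq_zero_of_mem_StabSet_left hg hiτ hk hik.symm]
    · exact ht.2 i k hik
  have hcols : ∀ k ∉ univ.biUnion B, ∀ j ∈ univ.biUnion B, t k j = 0 := fun k hk j hj => by
    by_cases hkj : f k = f j
    · obtain ⟨τ, -, hjτ⟩ := mem_biUnion.1 hj
      rw [hg_eq k j hkj, hD.apply_eq_zero_of_mem_StabSet_right hg hjτ hk hkj]
    · exact ht.2 k j hkj
  let _ := ht.1.invertible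
  have hcols_inv : ∀ k ∉ univ.biUnion B, ∀ j ∈ univ.biUnion B, t⁻¹ k j = 0 :=
    blockTriangular_notMem_iff.1
      (blockTriangular_inv_of_blockTriangular (blockTriangular_notMem_iff.2 hcols))
  rw [hD.mem_RcircSet_iff] at hr ⊢
  obtain ⟨hrR, hrA, hrB⟩ := hr
  exact ⟨conj_mem_RSet ht hrR,
    mul_conj_eq_of_mul_eq (diagProj_mul_mul_diagProj_eq_diagProj_mul hrows) hrA
      (mul_inv_of_invertible t),
    conj_mul_eq_of_mul_eq (diagProj_mul_mul_diagProj_eq_mul_diagProj hcols_inv) hrB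
      (mul_inv_of_invertible t)⟩

end IsBlockRookPlacement

theorem stmt13 {n s : ℕ} (f : Fin n → Fin s)
    (m : ℕ) (A B : Fin m → Finset (Fin n)) (hc : ∀ t, (B t).card = (A t).card)
    (hblocks : ∀ t, ∃ k l : Fin s, k < l ∧ (∀ i ∈ A t, f i = k) ∧ (∀ j ∈ B t, f j = l))
    (hdisjA : ∀ t t', t ≠ t' → Disjoint (A t) (A t'))
    (hdisjB : ∀ t t', t ≠ t' → Disjoint (B t) (B t'))
    (Λ : Matrix (Fin n) (Fin n) F)
    (hsupp : ∀ i j, Λ i j ≠ 0 → ∃ t, i ∈ A t ∧ j ∈ B t)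
    (hinv : ∀ t, IsUnit (Matrix.of fun (a b : Fin (A t).card) =>
      Λ (((A t).orderIsoOfFin rfl a : Fin n)) (((B t).orderIsoOfFin (hc t) b : Fin n))))
    (g₀ b t : Matrix (Fin n) (Fin n) F)
    (hg₀ : g₀ ∈ StabSet F f Λ) (hb : b ∈ NSet F f) (ht : t ∈ RSet F f)
    (hdec : g₀ = b * t)
    (r : Matrix (Fin n) (Fin n) F) (hr : r ∈ RcircSet F f Λ) :
    t * r * t⁻¹ ∈ RcircSet F f Λ ∧
      ∀ b' t' : Matrix (Fin n) (Fin n) F,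
        b' ∈ NSet F f → t' ∈ RSet F f → g₀ = b' * t' →
          t' * r * t'⁻¹ = t * r * t⁻¹ := by
  have hD : IsBlockRookPlacement f A B hc Λ := ⟨hblocks, hdisjA, hdisjB, hsupp, hinv⟩
  refine ⟨hD.conj_mem_RcircSet hg₀ hb ht hdec hr, fun b' t' hb' ht' hdec' => ?_⟩
  rw [eq_of_mul_eq_mul_of_mem_NSet hb' hb ht' ht (hdec'.symm.trans hdec)]
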